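/- Let λ, λ' ≥ 0, θ, θ' ∈ ℝ^d, and let g ∈ ∂‖·‖₁(θ), g' ∈ ∂‖·‖₁(θ'). Then ⟨λ'g' − λg, θ' − θ⟩ ≥ (λ' − λ)(‖θ'‖₁ − ‖θ‖₁). -/

import Mathlib

open scoped RealInnerProductSpace BigOperators

noncomputable def l1 {d : ℕ} (x : EuclideanSpace ℝ (Fin d)) : ℝ := ∑ i, |x i|

def IsL1Subgradient {d : ℕ} (g θ : EuclideanSpace ℝ (Fin d)) : Prop :=
  ∀ w : EuclideanSpace ℝ (Fin d), l1 θ + ⟪g, w - θ⟫ ≤ l1 w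

/-! Testing the subgradient inequality of `g` at `θ'` and that of `g'` at `θ` sandwiches
`‖θ'‖₁ - ‖θ‖₁` between `⟪g, θ' - θ⟫` and `⟪g', θ' - θ⟫`; weighting the two bounds by `λ` and
`λ'` gives the estimate. -/

section Subgradient

variable {E : Type*} [NormedAddCommGroup E] [InnerProductSpace ℝ E] {f : E → ℝ} {x x' g g' : E}

theorem inner_sub_le_sub_of_subgradient (hg : ∀ w, f x + ⟪g, w - x⟫ ≤ f w) (x' : E) :
    ⟪g, x' - x⟫ ≤ f x' - f x := by
  linarith [hg x']

theorem sub_le_inner_sub_of_subgradient (hg' : ∀ w, f x' + ⟪g', w - x'⟫ ≤ f w) (x : E) :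
    f x' - f x ≤ ⟪g', x' - x⟫ := by
  have h := inner_sub_le_sub_of_subgradient hg' x
  rw [← neg_sub, inner_neg_right] at h
  linarith

theorem weighted_subgradient_monotone {lam lam' : ℝ} (hlam : 0 ≤ lam) (hlam' : 0 ≤ lam')
    (hg : ∀ w, f x + ⟪g, w - x⟫ ≤ f w) (hg' : ∀ w, f x' + ⟪g', w - x'⟫ ≤ f w) :
    (lam' - lam) * (f x' - f x) ≤ ⟪lam' • g' - lam • g, x' - x⟫ := by
  calc (lam' - lam) * (f x' - f x) = lam' * (f x' - f x) - lam * (f x' - f x) := by ring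
    _ ≤ lam' * ⟪g', x' - x⟫ - lam * ⟪g, x' - x⟫ :=
      sub_le_sub (mul_le_mul_of_nonneg_left (sub_le_inner_sub_of_subgradient hg' x) hlam')
        (mul_le_mul_of_nonneg_left (inner_sub_le_sub_of_subgradient hg x') hlam)
    _ = ⟪lam' • g' - lam • g, x' - x⟫ := by
      rw [inner_sub_left, real_inner_smul_left, real_inner_smul_left]

end Subgradient

/-- Monotonicity-type estimate for ℓ1 subgradients with varying regularization weights:
`⟨λ'g' − λg, θ' − θ⟩ ≥ (λ' − λ)(‖θ'‖₁ − ‖θ‖₁)`. -/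
theorem l1_subgradient_monotone {d : ℕ} (lam lam' : ℝ) (hlam : 0 ≤ lam) (hlam' : 0 ≤ lam')
    (θ θ' g g' : EuclideanSpace ℝ (Fin d))
    (hg : IsL1Subgradient g θ) (hg' : IsL1Subgradient g' θ') :
    (lam' - lam) * (l1 θ' - l1 θ) ≤ ⟪lam' • g' - lam • g, θ' - θ⟫ :=
  weighted_subgradient_monotone hlam hlam' hg hg'
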